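/- Let f belong to (an equivalence class in) L^1(P̃_X), let 𝒫 = {S_1,…,S_m} partition N, let g be a coalitional value of two-coefficient form whose coefficient families are nonnegative and each sum to one, and let (𝒜^(k), 𝒯^(k), X^(k)), k = 1,…,K, be independent samples from P_j^{(g,𝒫)} ⊗ P_i^{(g,S_j)} ⊗ P_X. Then for P_X-almost every x*, the error 𝓔_K := K^{-1} Σ_{k=1}^K Δ_i(𝒜^(k), 𝒯^(k), X^(k); x*, f) − g_i[N, v^{ME}(·; x*, X, f), 𝒫] converges to 0 in probability as K → ∞; and if moreover f ∈ L^2(P̃_X), then ‖𝓔_K‖²_{L²(ℙ)} ≤ K^{-1} · Var(Δ_i(𝒜^(1), 𝒯^(1), X^(1); x*, f)) ≤ (4/K) · ν_{x*}^{(2)}(f, 𝒫, S_j) · max_{A⊆M∖{j}, T⊆S_j∖{i}} ( w_j^{(1)}(A,M) w_i^{(2)}(T,S_j) ), so 𝓔_K → 0 in L²(ℙ) at rate O(K^{-1/2}). -/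

import Mathlib

/-!
Fix `x*`. The sampling law `P_j^{(g,𝒫)} ⊗ P_i^{(g,S_j)} ⊗ P_X` is a finite mixture of copies of
`P_X`, the copy indexed by `(A, T)` carrying mass `w¹(A) w²(T)`; hence the mean of
`Δ_i(𝒜, 𝒯, X; x*, f)` is exactly `g_i[N, v^{ME}(·; x*, X, f), 𝒫]`, and the estimator is a sample
mean of i.i.d. copies of it. The strong law gives consistency and independence gives the
mean-square error `Var / K`. All the slices `x ↦ f(x*_S, x_{-S})` are integrable (square
integrable) for `P_X`-a.e. `x*`, because `P_{X_S} ⊗ P_{X_{-S}} ≤ 2^n P̃_X`. Finally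
`Var ≤ 𝔼[Δ²]`, `(a - b)² ≤ 2a² + 2b²`, and the sets `T` and `T ∪ {i}`, for `T ⊆ S_j ∖ {i}`,
enumerate every subset of `S_j` exactly once, which gives the bound in terms of `ν^{(2)}`.
-/

open MeasureTheory ProbabilityTheory ENNReal Filter Finset

noncomputable section

/-- Discrete σ-algebra on the (finite) space of coalitions. -/
instance {k : ℕ} : MeasurableSpace (Finset (Fin k)) := ⊤

/-- `merge n S y x` is the vector in `ℝ^n` agreeing with `y` on `S` and with `x` on `N∖S`,
i.e. the vector `(y_S, x_{-S})`. -/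
def merge (n : ℕ) (S : Finset (Fin n)) (y x : Fin n → ℝ) : Fin n → ℝ :=
  fun i => if i ∈ S then y i else x i

/-- The product measure `P_{X_S} ⊗ P_{X_{-S}}` viewed as a measure on `ℝ^n`
(obtained by merging two independent copies along `S`). -/
def prodPart (n : ℕ) (P : Measure (Fin n → ℝ)) (S : Finset (Fin n)) :
    Measure (Fin n → ℝ) :=
  (P.prod P).map (fun q => merge n S q.1 q.2)

/-- The mixture measure `P̃_X = 2^{-n} ∑_{S ⊆ N} P_{X_S} ⊗ P_{X_{-S}}` on `ℝ^n`. -/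
def tildeP (n : ℕ) (P : Measure (Fin n → ℝ)) : Measure (Fin n → ℝ) :=
  ((2 : ℝ≥0∞) ^ n)⁻¹ • ∑ S : Finset (Fin n), prodPart n P S

/-- The marginal game `v^{ME}(S; x*, X, f) = E[f(x*_S, X_{-S})]`. -/
def vME (n : ℕ) (P : Measure (Fin n → ℝ)) (f : (Fin n → ℝ) → ℝ)
    (xs : Fin n → ℝ) (S : Finset (Fin n)) : ℝ :=
  ∫ x, f (merge n S xs x) ∂P

/-- A linear game value `h_i[N,v] = ∑_{S ⊆ N∖{i}} w(S) (v(S∪{i}) - v(S))`. -/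
def gameValue (n : ℕ) (w : Finset (Fin n) → ℝ) (i : Fin n)
    (v : Finset (Fin n) → ℝ) : ℝ :=
  ∑ S ∈ (univ.erase i).powerset, w S * (v (insert i S) - v S)

/-- The discrete measure on subsets of `D` assigning mass `w T` to each `T ⊆ D`.
For `D = N∖{i}` and nonnegative weights summing to one this is `P_i^{(h)}`. -/
def subsetMeasure (k : ℕ) (D : Finset (Fin k)) (w : Finset (Fin k) → ℝ) :
    Measure (Finset (Fin k)) :=
  ∑ T ∈ D.powerset, (ENNReal.ofReal (w T)) • Measure.dirac T

/-- `Δ_i(S, x; x*, f) = f(x*_{S∪{i}}, x_{-(S∪{i})}) - f(x*_S, x_{-S})`. -/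
def deltaFun (n : ℕ) (f : (Fin n → ℝ) → ℝ) (i : Fin n) (xs : Fin n → ℝ) :
    Finset (Fin n) × (Fin n → ℝ) → ℝ :=
  fun q => f (merge n (insert i q.1) xs q.2) - f (merge n q.1 xs q.2)

/-- The union `Q_A = ∪_{α ∈ A} S_α` of the groups indexed by `A ⊆ M`. -/
def qUnion (n m : ℕ) (Pt : Fin m → Finset (Fin n)) (A : Finset (Fin m)) :
    Finset (Fin n) :=
  A.biUnion Pt

/-- `Δ_j(A, x; x*, f) = f(x*_{Q_{A∪{j}}}, x_{-Q_{A∪{j}}}) − f(x*_{Q_A}, x_{-Q_A})`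
for a partition `Pt = {S_1,…,S_m}` of `N`. -/
def qDelta (n m : ℕ) (Pt : Fin m → Finset (Fin n)) (f : (Fin n → ℝ) → ℝ)
    (j : Fin m) (xs : Fin n → ℝ) : Finset (Fin m) × (Fin n → ℝ) → ℝ :=
  fun q => f (merge n (qUnion n m Pt (insert j q.1)) xs q.2)
    - f (merge n (qUnion n m Pt q.1) xs q.2)

/-- A coalitional value of two-coefficient form:
`g_i[N, v, 𝒫] = ∑_{A⊆M∖{j}} ∑_{T⊆S_j∖{i}} w¹_j(A,M) w²_i(T,S_j)
  [v(Q_A ∪ T ∪ {i}) − v(Q_A ∪ T)]` for `i ∈ S_j`. -/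
def coalVal (n m : ℕ) (Pt : Fin m → Finset (Fin n)) (j : Fin m) (i : Fin n)
    (w1 : Finset (Fin m) → ℝ) (w2 : Finset (Fin n) → ℝ)
    (v : Finset (Fin n) → ℝ) : ℝ :=
  ∑ A ∈ (univ.erase j).powerset, ∑ T ∈ ((Pt j).erase i).powerset,
    w1 A * w2 T *
      (v (insert i (qUnion n m Pt A ∪ T)) - v (qUnion n m Pt A ∪ T))

/-- `Δ_i(A, T, x; x*, f) = f(x*_{Q_A∪T∪{i}}, x_{-(Q_A∪T∪{i})}) − f(x*_{Q_A∪T}, x_{-(Q_A∪T)})`. -/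
def cDelta (n m : ℕ) (Pt : Fin m → Finset (Fin n)) (f : (Fin n → ℝ) → ℝ)
    (i : Fin n) (xs : Fin n → ℝ) :
    Finset (Fin m) × (Finset (Fin n) × (Fin n → ℝ)) → ℝ :=
  fun q => f (merge n (insert i (qUnion n m Pt q.1 ∪ q.2.1)) xs q.2.2)
    - f (merge n (qUnion n m Pt q.1 ∪ q.2.1) xs q.2.2)

section SampleMean

variable {Ω β : Type*} [MeasurableSpace Ω] [MeasurableSpace β] {Pr : Measure Ω} {μ : Measure β}
  {Z : ℕ → Ω → β} {g : β → ℝ}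

lemma identDistrib_comp_of_hasLaw (hZ : ∀ k, HasLaw (Z k) μ Pr) (hg : AEMeasurable g μ) (k : ℕ) :
    IdentDistrib (g ∘ Z k) (g ∘ Z 0) Pr Pr :=
  ((hZ k).identDistrib (hZ 0)).comp_of_aemeasurable (by rwa [(hZ k).map_eq])

lemma pairwise_indepFun_comp_of_hasLaw (hZ : ∀ k, HasLaw (Z k) μ Pr)
    (hindep : Pairwise fun k l => Z k ⟂ᵢ[Pr] Z l) (hg : AEMeasurable g μ) :
    Pairwise fun k l => (g ∘ Z k) ⟂ᵢ[Pr] (g ∘ Z l) := fun k l hkl =>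
  (hindep hkl).comp₀ (hZ k).aemeasurable (hZ l).aemeasurable
    (by rwa [(hZ k).map_eq]) (by rwa [(hZ l).map_eq])

variable [IsProbabilityMeasure Pr]

theorem tendstoInMeasure_sampleMean_sub_integral {Y : ℕ → Ω → ℝ} (hint : Integrable (Y 0) Pr)
    (hindep : Pairwise fun k l => Y k ⟂ᵢ[Pr] Y l) (hident : ∀ k, IdentDistrib (Y k) (Y 0) Pr Pr) :
    TendstoInMeasure Pr (fun (K : ℕ) ω => (K : ℝ)⁻¹ * ∑ k ∈ range K, Y k ω - Pr[Y 0])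
      atTop (fun _ => 0) := by
  refine tendstoInMeasure_of_tendsto_ae (fun K => ?_) ?_
  · exact ((Finset.aestronglyMeasurable_fun_sum _ fun k _ =>
      (hident k).aestronglyMeasurable_fst).const_mul _).sub aestronglyMeasurable_const
  · filter_upwards [strong_law_ae Y hint hindep hident] with ω h
    simpa using h.sub_const Pr[Y 0]

theorem integral_sq_sampleMean_sub_integral {Y : ℕ → Ω → ℝ} (h2 : MemLp (Y 0) 2 Pr)
    (hindep : Pairwise fun k l => Y k ⟂ᵢ[Pr] Y l) (hident : ∀ k, IdentDistrib (Y k) (Y 0) Pr Pr)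
    {K : ℕ} (hK : 0 < K) :
    ∫ ω, ((K : ℝ)⁻¹ * ∑ k ∈ range K, Y k ω - Pr[Y 0]) ^ 2 ∂Pr = (K : ℝ)⁻¹ * Var[Y 0; Pr] := by
  have hY : ∀ k, MemLp (Y k) 2 Pr := fun k => (hident k).symm.memLp_snd h2
  have hmean : Pr[fun ω => (K : ℝ)⁻¹ * ∑ k ∈ range K, Y k ω] = Pr[Y 0] := by
    rw [integral_const_mul, integral_finsetSum _ fun k _ => (hY k).integrable one_le_two]
    simp [(hident _).integral_eq]
    field_simp
  have hvar : Var[∑ k ∈ range K, Y k; Pr] = K * Var[Y 0; Pr] := by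
    rw [IndepFun.variance_sum (fun k _ => hY k) fun k _ l _ hkl => hindep hkl]
    simp [(hident _).variance_eq]
  have hmeas : AEMeasurable (fun ω => (K : ℝ)⁻¹ * ∑ k ∈ range K, Y k ω) Pr :=
    (Finset.aemeasurable_fun_sum _ fun k _ => (hY k).aemeasurable).const_mul _
  rw [← hmean, ← variance_eq_integral hmeas]
  simp only [← Finset.sum_apply, variance_const_mul, hvar]
  field_simp

theorem tendstoInMeasure_monteCarlo_sub_integral (hZ : ∀ k, HasLaw (Z k) μ Pr)
    (hindep : Pairwise fun k l => Z k ⟂ᵢ[Pr] Z l) (hg : Integrable g μ) :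
    TendstoInMeasure Pr (fun (K : ℕ) ω => (K : ℝ)⁻¹ * ∑ k ∈ range K, g (Z k ω) - ∫ x, g x ∂μ)
      atTop (fun _ => 0) := by
  have hint : Integrable (g ∘ Z 0) Pr :=
    ((hZ 0).map_eq ▸ hg).comp_aemeasurable (hZ 0).aemeasurable
  rw [← (hZ 0).integral_comp hg.1]
  exact tendstoInMeasure_sampleMean_sub_integral hint
    (pairwise_indepFun_comp_of_hasLaw hZ hindep hg.1.aemeasurable)
    (identDistrib_comp_of_hasLaw hZ hg.1.aemeasurable)

theorem integral_sq_monteCarlo_sub_integral (hZ : ∀ k, HasLaw (Z k) μ Pr)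
    (hindep : Pairwise fun k l => Z k ⟂ᵢ[Pr] Z l) (hg : MemLp g 2 μ) {K : ℕ} (hK : 0 < K) :
    ∫ ω, ((K : ℝ)⁻¹ * ∑ k ∈ range K, g (Z k ω) - ∫ x, g x ∂μ) ^ 2 ∂Pr
      = (K : ℝ)⁻¹ * Var[fun ω => g (Z 0 ω); Pr] := by
  have h2 : MemLp (g ∘ Z 0) 2 Pr := ((hZ 0).map_eq ▸ hg).comp_of_map (hZ 0).aemeasurable
  rw [← (hZ 0).integral_comp hg.1]
  exact integral_sq_sampleMean_sub_integral h2
    (pairwise_indepFun_comp_of_hasLaw hZ hindep hg.1.aemeasurable)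
    (identDistrib_comp_of_hasLaw hZ hg.1.aemeasurable) hK

lemma variance_comp_le_integral_sq {X : Ω → β} (hX : HasLaw X μ Pr)
    (hg : AEStronglyMeasurable g μ) : Var[fun ω => g (X ω); Pr] ≤ ∫ x, g x ^ 2 ∂μ :=
  (variance_le_expectation_sq ((hX.map_eq ▸ hg).comp_aemeasurable hX.aemeasurable)).trans_eq
    (hX.integral_comp (hg.pow 2))

end SampleMean

section SubsetMeasure

variable {k : ℕ} {D : Finset (Fin k)} {w : Finset (Fin k) → ℝ}
  {γ : Type*} [MeasurableSpace γ] {ν : Measure γ} [SigmaFinite ν]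

instance : IsFiniteMeasure (subsetMeasure k D w) :=
  ⟨by simp [subsetMeasure, ENNReal.sum_lt_top]⟩

lemma subsetMeasure_prod :
    (subsetMeasure k D w).prod ν = ∑ T ∈ D.powerset, ENNReal.ofReal (w T) • ν.map (Prod.mk T) := by
  refine Measure.prod_eq fun s t hs ht => ?_
  simp only [subsetMeasure, Measure.coe_finsetSum, Finset.sum_apply, Measure.smul_apply,
    smul_eq_mul, Measure.map_apply measurable_prodMk_left (hs.prod ht), Measure.dirac_apply,
    Finset.sum_mul]
  refine Finset.sum_congr rfl fun T _ => ?_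
  by_cases h : T ∈ s <;> simp [h]

lemma integrable_subsetMeasure_prod {g : Finset (Fin k) × γ → ℝ}
    (hg : ∀ T ∈ D.powerset, Integrable (fun x => g (T, x)) ν) :
    Integrable g ((subsetMeasure k D w).prod ν) := by
  rw [subsetMeasure_prod]
  refine integrable_finsetSum_measure.mpr fun T hT => Integrable.smul_measure ?_ ofReal_ne_top
  exact (measurableEmbedding_prodMk_left T).integrable_map_iff.mpr (hg T hT)

lemma integral_subsetMeasure_prod (hw : ∀ T ∈ D.powerset, 0 ≤ w T) {g : Finset (Fin k) × γ → ℝ}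
    (hg : ∀ T ∈ D.powerset, Integrable (fun x => g (T, x)) ν) :
    ∫ q, g q ∂(subsetMeasure k D w).prod ν = ∑ T ∈ D.powerset, w T * ∫ x, g (T, x) ∂ν := by
  rw [subsetMeasure_prod, integral_finsetSum_measure fun T hT =>
    Integrable.smul_measure ((measurableEmbedding_prodMk_left T).integrable_map_iff.mpr (hg T hT))
      ofReal_ne_top]
  refine Finset.sum_congr rfl fun T hT => ?_
  rw [integral_smul_measure, (measurableEmbedding_prodMk_left T).integral_map,
    toReal_ofReal (hw T hT), smul_eq_mul]

end SubsetMeasure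

section SubsetMeasureProd

variable {m n : ℕ} {D₁ : Finset (Fin m)} {w₁ : Finset (Fin m) → ℝ}
  {D₂ : Finset (Fin n)} {w₂ : Finset (Fin n) → ℝ}
  {γ : Type*} [MeasurableSpace γ] {ν : Measure γ} [SigmaFinite ν]
  {g : Finset (Fin m) × (Finset (Fin n) × γ) → ℝ}

lemma integrable_subsetMeasure_prod_prod
    (hg : ∀ A ∈ D₁.powerset, ∀ T ∈ D₂.powerset, Integrable (fun x => g (A, (T, x))) ν) :
    Integrable g ((subsetMeasure m D₁ w₁).prod ((subsetMeasure n D₂ w₂).prod ν)) :=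
  integrable_subsetMeasure_prod fun A hA => integrable_subsetMeasure_prod (hg A hA)

lemma integral_subsetMeasure_prod_prod (hw₁ : ∀ A ∈ D₁.powerset, 0 ≤ w₁ A)
    (hw₂ : ∀ T ∈ D₂.powerset, 0 ≤ w₂ T)
    (hg : ∀ A ∈ D₁.powerset, ∀ T ∈ D₂.powerset, Integrable (fun x => g (A, (T, x))) ν) :
    ∫ q, g q ∂(subsetMeasure m D₁ w₁).prod ((subsetMeasure n D₂ w₂).prod ν)
      = ∑ A ∈ D₁.powerset, ∑ T ∈ D₂.powerset, w₁ A * w₂ T * ∫ x, g (A, (T, x)) ∂ν := by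
  rw [integral_subsetMeasure_prod hw₁ fun A hA => integrable_subsetMeasure_prod (hg A hA)]
  refine Finset.sum_congr rfl fun A hA => ?_
  rw [integral_subsetMeasure_prod hw₂ (hg A hA), Finset.mul_sum]
  simp only [mul_assoc]

end SubsetMeasureProd

section Slices

variable {n : ℕ} {P : Measure (Fin n → ℝ)} {f : (Fin n → ℝ) → ℝ}

lemma measurable_merge (S : Finset (Fin n)) :
    Measurable fun q : (Fin n → ℝ) × (Fin n → ℝ) => merge n S q.1 q.2 := by
  refine measurable_pi_lambda _ fun a => ?_
  by_cases h : a ∈ S <;> simp only [merge, h, if_true, if_false] <;> fun_prop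

lemma prodPart_le_smul_tildeP (S : Finset (Fin n)) :
    prodPart n P S ≤ (2 : ℝ≥0∞) ^ n • tildeP n P := by
  rw [tildeP, smul_smul, ENNReal.mul_inv_cancel (by simp) (by simp), one_smul,
    ← Measure.sum_fintype]
  exact Measure.le_sum _ S

lemma memLp_comp_merge {p : ℝ≥0∞} (hf : MemLp f p (tildeP n P)) (S : Finset (Fin n)) :
    MemLp (fun q : (Fin n → ℝ) × (Fin n → ℝ) => f (merge n S q.1 q.2)) p (P.prod P) := by
  have h : MemLp f p (prodPart n P S) :=
    (hf.smul_measure (by simp)).mono_measure (prodPart_le_smul_tildeP S)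
  exact (memLp_map_measure_iff h.1 (measurable_merge S).aemeasurable).mp h

variable [SFinite P]

lemma ae_integrable_comp_merge (hf : MemLp f 1 (tildeP n P)) (S : Finset (Fin n)) :
    ∀ᵐ xs ∂P, Integrable (fun x => f (merge n S xs x)) P :=
  (memLp_one_iff_integrable.mp (memLp_comp_merge hf S)).prod_right_ae

lemma ae_memLp_two_comp_merge (hf : MemLp f 2 (tildeP n P)) (S : Finset (Fin n)) :
    ∀ᵐ xs ∂P, MemLp (fun x => f (merge n S xs x)) 2 P := by
  have h := memLp_comp_merge hf S
  filter_upwards [h.integrable_sq.prod_right_ae, h.1.prodMk_left] with xs hsq hm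
  exact (memLp_two_iff_integrable_sq hm).mpr hsq

end Slices

lemma Finset.sum_powerset_erase_insert_add {α M : Type*} [DecidableEq α] [AddCommMonoid M]
    {s : Finset α} {a : α} (ha : a ∈ s) (h : Finset α → M) :
    ∑ t ∈ (s.erase a).powerset, (h (insert a t) + h t) = ∑ t ∈ s.powerset, h t := by
  conv_rhs => rw [← insert_erase ha]
  rw [sum_powerset_insert (notMem_erase a s), sum_add_distrib, add_comm]

lemma integral_sq_sub_le {α : Type*} [MeasurableSpace α] {μ : Measure α} {a b : α → ℝ}
    (ha : MemLp a 2 μ) (hb : MemLp b 2 μ) :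
    ∫ x, (a x - b x) ^ 2 ∂μ ≤ 2 * ∫ x, a x ^ 2 ∂μ + 2 * ∫ x, b x ^ 2 ∂μ := by
  rw [← integral_const_mul, ← integral_const_mul,
    ← integral_add (ha.integrable_sq.const_mul 2) (hb.integrable_sq.const_mul 2)]
  refine integral_mono (ha.sub hb).integrable_sq
    ((ha.integrable_sq.const_mul 2).add (hb.integrable_sq.const_mul 2)) fun x => ?_
  nlinarith [sq_nonneg (a x + b x)]

/-- `ν_{x*}^{(2)}(f, 𝒫, S_j)`. -/
def coalSecondMoment (n m : ℕ) (P : Measure (Fin n → ℝ)) (f : (Fin n → ℝ) → ℝ)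
    (Pt : Fin m → Finset (Fin n)) (j : Fin m) (xs : Fin n → ℝ) : ℝ :=
  ∑ A ∈ (univ.erase j).powerset, ∑ T ∈ (Pt j).powerset,
    ∫ x, |f (merge n (qUnion n m Pt A ∪ T) xs x)| ^ 2 ∂P

section CoalitionalEstimator

variable {n m : ℕ} {P : Measure (Fin n → ℝ)} [IsProbabilityMeasure P] {f : (Fin n → ℝ) → ℝ}
  {Pt : Fin m → Finset (Fin n)} {j : Fin m} {i : Fin n}
  {w₁ : Finset (Fin m) → ℝ} {w₂ : Finset (Fin n) → ℝ} {xs : Fin n → ℝ}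

lemma integrable_cDelta (hf : ∀ S, Integrable (fun x => f (merge n S xs x)) P) :
    Integrable (cDelta n m Pt f i xs)
      ((subsetMeasure m (univ.erase j) w₁).prod ((subsetMeasure n ((Pt j).erase i) w₂).prod P)) :=
  integrable_subsetMeasure_prod_prod fun A _ T _ =>
    (hf (insert i (qUnion n m Pt A ∪ T))).sub (hf (qUnion n m Pt A ∪ T))

lemma integral_cDelta_eq_coalVal (hf : ∀ S, Integrable (fun x => f (merge n S xs x)) P)
    (hw₁ : ∀ A ∈ (univ.erase j).powerset, 0 ≤ w₁ A)
    (hw₂ : ∀ T ∈ ((Pt j).erase i).powerset, 0 ≤ w₂ T) :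
    ∫ q, cDelta n m Pt f i xs q
        ∂(subsetMeasure m (univ.erase j) w₁).prod ((subsetMeasure n ((Pt j).erase i) w₂).prod P)
      = coalVal n m Pt j i w₁ w₂ (vME n P f xs) := by
  rw [integral_subsetMeasure_prod_prod hw₁ hw₂ fun A _ T _ =>
    (hf (insert i (qUnion n m Pt A ∪ T))).sub (hf (qUnion n m Pt A ∪ T))]
  refine sum_congr rfl fun A _ => sum_congr rfl fun T _ => ?_
  rw [vME, vME, ← integral_sub (hf _) (hf _)]
  rfl

lemma memLp_two_cDelta (hf : ∀ S, MemLp (fun x => f (merge n S xs x)) 2 P) :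
    MemLp (cDelta n m Pt f i xs) 2
      ((subsetMeasure m (univ.erase j) w₁).prod ((subsetMeasure n ((Pt j).erase i) w₂).prod P)) :=
  (memLp_two_iff_integrable_sq (integrable_cDelta fun S => (hf S).integrable one_le_two).1).mpr
    (integrable_subsetMeasure_prod_prod fun A _ T _ =>
      ((hf (insert i (qUnion n m Pt A ∪ T))).sub (hf (qUnion n m Pt A ∪ T))).integrable_sq)

lemma integral_sq_cDelta_le (hi : i ∈ Pt j) (hf : ∀ S, MemLp (fun x => f (merge n S xs x)) 2 P)
    (hw₁ : ∀ A ∈ (univ.erase j).powerset, 0 ≤ w₁ A)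
    (hw₂ : ∀ T ∈ ((Pt j).erase i).powerset, 0 ≤ w₂ T) {W : ℝ}
    (hW : ∀ A ∈ (univ.erase j).powerset, ∀ T ∈ ((Pt j).erase i).powerset, w₁ A * w₂ T ≤ W) :
    ∫ q, cDelta n m Pt f i xs q ^ 2
        ∂(subsetMeasure m (univ.erase j) w₁).prod ((subsetMeasure n ((Pt j).erase i) w₂).prod P)
      ≤ 2 * W * coalSecondMoment n m P f Pt j xs := by
  set I : Finset (Fin n) → ℝ := fun S => ∫ x, f (merge n S xs x) ^ 2 ∂P
  have hterm : ∀ A ∈ (univ.erase j).powerset, ∀ T ∈ ((Pt j).erase i).powerset,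
      w₁ A * w₂ T * ∫ x, cDelta n m Pt f i xs (A, (T, x)) ^ 2 ∂P
        ≤ 2 * W * (I (insert i (qUnion n m Pt A ∪ T)) + I (qUnion n m Pt A ∪ T)) := by
    intro A hA T hT
    have hw : 0 ≤ w₁ A * w₂ T := mul_nonneg (hw₁ A hA) (hw₂ T hT)
    calc _ ≤ W * (2 * I (insert i (qUnion n m Pt A ∪ T)) + 2 * I (qUnion n m Pt A ∪ T)) :=
          mul_le_mul (hW A hA T hT) (integral_sq_sub_le (hf _) (hf _))
            (integral_nonneg fun _ => sq_nonneg _) (hw.trans (hW A hA T hT))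
      _ = _ := by ring
  rw [integral_subsetMeasure_prod_prod hw₁ hw₂ fun A _ T _ =>
    ((hf (insert i (qUnion n m Pt A ∪ T))).sub (hf (qUnion n m Pt A ∪ T))).integrable_sq]
  calc _ ≤ ∑ A ∈ (univ.erase j).powerset, ∑ T ∈ ((Pt j).erase i).powerset,
        2 * W * (I (insert i (qUnion n m Pt A ∪ T)) + I (qUnion n m Pt A ∪ T)) :=
        sum_le_sum fun A hA => sum_le_sum fun T hT => hterm A hA T hT
    _ = 2 * W * coalSecondMoment n m P f Pt j xs := by
      simp only [← mul_sum, coalSecondMoment, sq_abs, ← union_insert]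
      congr 1
      exact sum_congr rfl fun A _ =>
        sum_powerset_erase_insert_add hi fun T => I (qUnion n m Pt A ∪ T)

end CoalitionalEstimator

theorem stmt14_general (n m : ℕ) (P : Measure (Fin n → ℝ)) [IsProbabilityMeasure P]
    (f : (Fin n → ℝ) → ℝ) (hf : MemLp f 1 (tildeP n P))
    (Pt : Fin m → Finset (Fin n))
    (j : Fin m) (i : Fin n) (hi : i ∈ Pt j)
    (w1 : Finset (Fin m) → ℝ) (w2 : Finset (Fin n) → ℝ)
    (hw10 : ∀ A ∈ (univ.erase j).powerset, 0 ≤ w1 A)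
    (hw20 : ∀ T ∈ ((Pt j).erase i).powerset, 0 ≤ w2 T)
    {Ω : Type} [MeasurableSpace Ω] (Pr : Measure Ω) [IsProbabilityMeasure Pr]
    (Z : ℕ → Ω → Finset (Fin m) × (Finset (Fin n) × (Fin n → ℝ)))
    (hZmeas : ∀ k, Measurable (Z k))
    (hlaw : ∀ k, Measure.map (Z k) Pr =
      (subsetMeasure m (univ.erase j) w1).prod
        ((subsetMeasure n ((Pt j).erase i) w2).prod P))
    (hindep : iIndepFun Z Pr) :
    ∀ᵐ xs ∂P,
      TendstoInMeasure Pr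
        (fun (K : ℕ) (ω : Ω) =>
          (K : ℝ)⁻¹ * ∑ k ∈ Finset.range K, cDelta n m Pt f i xs (Z k ω)
            - coalVal n m Pt j i w1 w2 (vME n P f xs))
        atTop (fun _ => 0) ∧
      (MemLp f 2 (tildeP n P) →
        ∀ K : ℕ, 0 < K →
          (∫ ω, ((K : ℝ)⁻¹ * ∑ k ∈ Finset.range K, cDelta n m Pt f i xs (Z k ω)
              - coalVal n m Pt j i w1 w2 (vME n P f xs)) ^ 2 ∂Pr
            ≤ (K : ℝ)⁻¹ * variance (fun ω => cDelta n m Pt f i xs (Z 0 ω)) Pr) ∧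
          (K : ℝ)⁻¹ * variance (fun ω => cDelta n m Pt f i xs (Z 0 ω)) Pr
            ≤ (4 / K) *
              (∑ A ∈ (univ.erase j).powerset, ∑ T ∈ (Pt j).powerset,
                ∫ x, |f (merge n (qUnion n m Pt A ∪ T) xs x)| ^ 2 ∂P) *
              (((univ.erase j).powerset ×ˢ ((Pt j).erase i).powerset).sup'
                ⟨(∅, ∅), Finset.mem_product.mpr
                  ⟨Finset.empty_mem_powerset _, Finset.empty_mem_powerset _⟩⟩
                (fun q => w1 q.1 * w2 q.2))) := by
  have hslices2 : ∀ᵐ xs ∂P, MemLp f 2 (tildeP n P) →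
      ∀ S, MemLp (fun x => f (merge n S xs x)) 2 P := by
    by_cases h2 : MemLp f 2 (tildeP n P)
    · filter_upwards [ae_all_iff.mpr (ae_memLp_two_comp_merge h2)] with xs h _ using h
    · exact ae_of_all _ fun _ h => absurd h h2
  filter_upwards [ae_all_iff.mpr (ae_integrable_comp_merge hf), hslices2] with xs hI hI2
  have hZ : ∀ k, HasLaw (Z k) _ Pr := fun k => ⟨(hZmeas k).aemeasurable, hlaw k⟩
  have hpair : Pairwise fun k l => Z k ⟂ᵢ[Pr] Z l := fun _ _ hkl => hindep.indepFun hkl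
  have hmean := integral_cDelta_eq_coalVal hI hw10 hw20 (Pt := Pt) (j := j) (i := i)
  refine ⟨hmean ▸ tendstoInMeasure_monteCarlo_sub_integral hZ hpair (integrable_cDelta hI),
    fun h2 K hK => ⟨?_, ?_⟩⟩
  · rw [← hmean, integral_sq_monteCarlo_sub_integral hZ hpair (memLp_two_cDelta (hI2 h2)) hK]
  · show _ ≤ 4 / K * coalSecondMoment n m P f Pt j xs * _
    generalize hWdef : ((univ.erase j).powerset ×ˢ ((Pt j).erase i).powerset).sup'
      ⟨(∅, ∅), by simp⟩ (fun q => w1 q.1 * w2 q.2) = W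
    have hbound := (variance_comp_le_integral_sq (hZ 0) (integrable_cDelta hI).1).trans
      (integral_sq_cDelta_le hi (hI2 h2) hw10 hw20 fun A hA T hT =>
        hWdef ▸ le_sup' (fun q : Finset (Fin m) × Finset (Fin n) => w1 q.1 * w2 q.2)
          (b := (A, T)) (mem_product.mpr ⟨hA, hT⟩))
    have hK : (0 : ℝ) ≤ (K : ℝ)⁻¹ := by positivity
    rw [div_eq_mul_inv]
    nlinarith [mul_le_mul_of_nonneg_left hbound hK,
      mul_nonneg hK ((variance_nonneg _ _).trans hbound)]

/-- Consistency and error rate of the Monte Carlo coalitional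
estimator. Let `f ∈ L¹(P̃_X)`, let `𝒫 = {S_1,…,S_m}` partition `N`, let the
coefficient families be nonnegative and each sum to one, and let
`(𝒜^(k), 𝒯^(k), X^(k))`, `k ∈ ℕ`, be i.i.d. samples from
`P_j^{(g,𝒫)} ⊗ P_i^{(g,S_j)} ⊗ P_X` on a probability space `(Ω, Pr)`. Then for
`P_X`-almost every `x*`, the Monte Carlo error converges to `0` in probability as
`K → ∞`; and if moreover `f ∈ L²(P̃_X)`, then
`‖𝓔_K‖²_{L²(Pr)} ≤ K⁻¹·Var(Δ_i(𝒜^(1), 𝒯^(1), X^(1); x*, f))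
  ≤ (4/K)·ν_{x*}^{(2)}(f,𝒫,S_j)·max_{A⊆M∖{j}, T⊆S_j∖{i}} (w¹_j(A,M) w²_i(T,S_j))`. -/
theorem stmt14 (n m : ℕ) (P : Measure (Fin n → ℝ)) [IsProbabilityMeasure P]
    (f : (Fin n → ℝ) → ℝ) (hf : MemLp f 1 (tildeP n P))
    (Pt : Fin m → Finset (Fin n))
    (hPtne : ∀ j, (Pt j).Nonempty)
    (hPtdisj : ∀ j k, j ≠ k → Disjoint (Pt j) (Pt k))
    (hPtcover : Finset.univ.biUnion Pt = (Finset.univ : Finset (Fin n)))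
    (j : Fin m) (i : Fin n) (hi : i ∈ Pt j)
    (w1 : Finset (Fin m) → ℝ) (w2 : Finset (Fin n) → ℝ)
    (hw10 : ∀ A ∈ (univ.erase j).powerset, 0 ≤ w1 A)
    (hw11 : ∑ A ∈ (univ.erase j).powerset, w1 A = 1)
    (hw20 : ∀ T ∈ ((Pt j).erase i).powerset, 0 ≤ w2 T)
    (hw21 : ∑ T ∈ ((Pt j).erase i).powerset, w2 T = 1)
    {Ω : Type} [MeasurableSpace Ω] (Pr : Measure Ω) [IsProbabilityMeasure Pr]
    (Z : ℕ → Ω → Finset (Fin m) × (Finset (Fin n) × (Fin n → ℝ)))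
    (hZmeas : ∀ k, Measurable (Z k))
    (hlaw : ∀ k, Measure.map (Z k) Pr =
      (subsetMeasure m (univ.erase j) w1).prod
        ((subsetMeasure n ((Pt j).erase i) w2).prod P))
    (hindep : iIndepFun Z Pr) :
    ∀ᵐ xs ∂P,
      TendstoInMeasure Pr
        (fun (K : ℕ) (ω : Ω) =>
          (K : ℝ)⁻¹ * ∑ k ∈ Finset.range K, cDelta n m Pt f i xs (Z k ω)
            - coalVal n m Pt j i w1 w2 (vME n P f xs))
        atTop (fun _ => 0) ∧
      (MemLp f 2 (tildeP n P) →
        ∀ K : ℕ, 0 < K →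
          (∫ ω, ((K : ℝ)⁻¹ * ∑ k ∈ Finset.range K, cDelta n m Pt f i xs (Z k ω)
              - coalVal n m Pt j i w1 w2 (vME n P f xs)) ^ 2 ∂Pr
            ≤ (K : ℝ)⁻¹ * variance (fun ω => cDelta n m Pt f i xs (Z 0 ω)) Pr) ∧
          (K : ℝ)⁻¹ * variance (fun ω => cDelta n m Pt f i xs (Z 0 ω)) Pr
            ≤ (4 / K) *
              (∑ A ∈ (univ.erase j).powerset, ∑ T ∈ (Pt j).powerset,
                ∫ x, |f (merge n (qUnion n m Pt A ∪ T) xs x)| ^ 2 ∂P) *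
              (((univ.erase j).powerset ×ˢ ((Pt j).erase i).powerset).sup'
                ⟨(∅, ∅), Finset.mem_product.mpr
                  ⟨Finset.empty_mem_powerset _, Finset.empty_mem_powerset _⟩⟩
                (fun q => w1 q.1 * w2 q.2))) :=
  stmt14_general n m P f hf Pt j i hi w1 w2 hw10 hw20 Pr Z hZmeas hlaw hindep
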